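/- Let (e_n)_{n≥1} and (d_n)_{n≥1} be nonnegative adapted processes on a filtered probability space that are tangent, i.e., for all n ≥ 1 and all t ∈ ℝ, almost surely P(e_n ≥ t | F_{n−1}) = P(d_n ≥ t | F_{n−1}). Then for every p ∈ (0,1], E[(∑_{n≥1} e_n)^p] ≤ 6 · E[(∑_{n≥1} d_n)^p]. -/

import Mathlib

/-!
Truncate at a level `L` and stop both sums before the first time either partial sum reaches `L`.
The stopping events are predictable and `min e_n L`, `min d_n L` have the same conditional law
given the past, so the two stopped sums of truncated terms have the same expectation. The stopped
sum of `e` dominates `min (∑ e) L - min (∑ d) L`, while the stopped sum of `d` overshoots `L` by at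
most one truncated term, hence is at most `2 min (∑ d) L`. This gives
`E[min (∑ e) L] ≤ 3 E[min (∑ d) L]` for every `L`. For `p < 1` the concave function `y ↦ y ^ p`
is the mixture `p (1 - p) ∫₀^∞ min y l · l ^ (p - 2) dl` of the truncations, and for `p = 1`
take `L = ∞`.
-/

open MeasureTheory ProbabilityTheory Set Finset
open scoped ENNReal

lemma lintegral_Ioc_zero_rpow_sub_one {p : ℝ} (hp0 : 0 < p) {c : ℝ} (hc : 0 < c) :
    ∫⁻ l in Ioc 0 c, ENNReal.ofReal (l ^ (p - 1)) = ENNReal.ofReal (c ^ p / p) := by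
  have hint : IntegrableOn (fun l : ℝ => l ^ (p - 1)) (Ioc 0 c) := by
    rw [← intervalIntegrable_iff_integrableOn_Ioc_of_le hc.le]
    exact intervalIntegral.intervalIntegrable_rpow' (by linarith)
  rw [← ofReal_integral_eq_lintegral_ofReal hint
      ((ae_restrict_iff' measurableSet_Ioc).2 (ae_of_all _ fun l hl => Real.rpow_nonneg hl.1.le _)),
    ← intervalIntegral.integral_of_le hc.le, integral_rpow (Or.inl (by linarith)),
    sub_add_cancel, Real.zero_rpow hp0.ne', sub_zero]

lemma lintegral_Ioi_rpow_sub_two {p : ℝ} (hp1 : p < 1) {c : ℝ} (hc : 0 < c) :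
    ∫⁻ l in Ioi c, ENNReal.ofReal (l ^ (p - 2)) = ENNReal.ofReal (c ^ (p - 1) / (1 - p)) := by
  rw [← ofReal_integral_eq_lintegral_ofReal (integrableOn_Ioi_rpow_of_lt (by linarith) hc)
      ((ae_restrict_iff' measurableSet_Ioi).2
        (ae_of_all _ fun l hl => Real.rpow_nonneg (hc.trans hl).le _)),
    integral_Ioi_rpow_of_lt (by linarith) hc, show p - 2 + 1 = p - 1 by ring, neg_div,
    ← div_neg, neg_sub]

lemma ofReal_mul_ofReal_rpow_sub_two {p l : ℝ} (hl : 0 < l) :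
    ENNReal.ofReal l * ENNReal.ofReal (l ^ (p - 2)) = ENNReal.ofReal (l ^ (p - 1)) := by
  rw [← ENNReal.ofReal_mul hl.le, show p - 1 = 1 + (p - 2) by ring, Real.rpow_add hl,
    Real.rpow_one]

lemma rpow_eq_mul_lintegral_min_of_ne_top {p : ℝ} (hp0 : 0 < p) (hp1 : p < 1) {y : ℝ≥0∞}
    (hy : y ≠ ∞) :
    y ^ p = ENNReal.ofReal (p * (1 - p)) *
      ∫⁻ l in Ioi 0, min y (ENNReal.ofReal l) * ENNReal.ofReal (l ^ (p - 2)) := by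
  rcases eq_or_ne y 0 with rfl | hy0
  · simp [ENNReal.zero_rpow_of_pos hp0]
  obtain ⟨c, hc, rfl⟩ : ∃ c : ℝ, 0 < c ∧ y = ENNReal.ofReal c :=
    ⟨y.toReal, ENNReal.toReal_pos hy0 hy, (ENNReal.ofReal_toReal hy).symm⟩
  have below : ∫⁻ l in Ioc 0 c, min (ENNReal.ofReal c) (ENNReal.ofReal l) *
      ENNReal.ofReal (l ^ (p - 2)) = ENNReal.ofReal (c ^ p / p) := by
    rw [← lintegral_Ioc_zero_rpow_sub_one hp0 hc]
    refine setLIntegral_congr_fun measurableSet_Ioc fun l hl => ?_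
    rw [min_eq_right (ENNReal.ofReal_le_ofReal hl.2), ofReal_mul_ofReal_rpow_sub_two hl.1]
  have above : ∫⁻ l in Ioi c, min (ENNReal.ofReal c) (ENNReal.ofReal l) *
      ENNReal.ofReal (l ^ (p - 2)) = ENNReal.ofReal (c ^ p / (1 - p)) := by
    rw [setLIntegral_congr_fun measurableSet_Ioi fun l hl => by
        rw [min_eq_left (ENNReal.ofReal_le_ofReal (le_of_lt hl))],
      lintegral_const_mul' _ _ ENNReal.ofReal_ne_top, lintegral_Ioi_rpow_sub_two hp1 hc,
      ← ENNReal.ofReal_mul hc.le, Real.rpow_sub_one hc.ne']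
    congr 1
    field_simp
  have hp : 0 < 1 - p := by linarith
  rw [← Ioc_union_Ioi_eq_Ioi hc.le, lintegral_union measurableSet_Ioi (Ioc_disjoint_Ioi le_rfl),
    below, above, ← ENNReal.ofReal_add (by positivity) (by positivity),
    ← ENNReal.ofReal_mul (by positivity), ENNReal.ofReal_rpow_of_pos hc]
  congr 1
  field_simp
  ring

lemma rpow_eq_mul_lintegral_min {p : ℝ} (hp0 : 0 < p) (hp1 : p < 1) (y : ℝ≥0∞) :
    y ^ p = ENNReal.ofReal (p * (1 - p)) *
      ∫⁻ l in Ioi 0, min y (ENNReal.ofReal l) * ENNReal.ofReal (l ^ (p - 2)) := by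
  rcases ne_or_eq y ∞ with hy | rfl
  · exact rpow_eq_mul_lintegral_min_of_ne_top hp0 hp1 hy
  rw [ENNReal.top_rpow_of_pos hp0, eq_comm]
  refine ENNReal.eq_top_of_forall_nnreal_le fun r => ?_
  have hr : (r : ℝ≥0∞) ^ p⁻¹ ≠ ∞ := ENNReal.rpow_ne_top_of_nonneg (by positivity) ENNReal.coe_ne_top
  calc (r : ℝ≥0∞) = ((r : ℝ≥0∞) ^ p⁻¹) ^ p := (ENNReal.rpow_inv_rpow hp0.ne' _).symm
    _ = _ := rpow_eq_mul_lintegral_min_of_ne_top hp0 hp1 hr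
    _ ≤ _ := by gcongr; exact le_top

lemma lintegral_rpow_eq_mul_lintegral_lintegral_min {Ω : Type*} [MeasurableSpace Ω]
    (μ : Measure Ω) [SFinite μ] {p : ℝ} (hp0 : 0 < p) (hp1 : p < 1) {X : Ω → ℝ≥0∞}
    (hX : Measurable X) :
    ∫⁻ x, X x ^ p ∂μ = ENNReal.ofReal (p * (1 - p)) *
      ∫⁻ l in Ioi 0, (∫⁻ x, min (X x) (ENNReal.ofReal l) ∂μ) * ENNReal.ofReal (l ^ (p - 2)) := by
  have hmeas : Measurable (Function.uncurry fun x (l : ℝ) =>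
      min (X x) (ENNReal.ofReal l) * ENNReal.ofReal (l ^ (p - 2))) := by
    fun_prop
  simp_rw [rpow_eq_mul_lintegral_min hp0 hp1 (X _)]
  rw [lintegral_const_mul' _ _ ENNReal.ofReal_ne_top,
    lintegral_lintegral_swap hmeas.aemeasurable]
  simp_rw [lintegral_mul_const' _ _ ENNReal.ofReal_ne_top]

theorem lintegral_rpow_le_of_lintegral_min_le {Ω : Type*} [MeasurableSpace Ω] {μ : Measure Ω}
    [SFinite μ] {X Y : Ω → ℝ≥0∞} (hX : Measurable X) (hY : Measurable Y) {C : ℝ≥0∞}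
    (hXY : ∀ L, ∫⁻ x, min (X x) L ∂μ ≤ C * ∫⁻ x, min (Y x) L ∂μ) {p : ℝ} (hp0 : 0 < p)
    (hp1 : p ≤ 1) :
    ∫⁻ x, X x ^ p ∂μ ≤ C * ∫⁻ x, Y x ^ p ∂μ := by
  rcases hp1.lt_or_eq with hp1 | rfl
  · have hmono : Monotone fun l : ℝ => ∫⁻ x, min (Y x) (ENNReal.ofReal l) ∂μ := fun l l' h =>
      lintegral_mono fun x => min_le_min le_rfl (ENNReal.ofReal_le_ofReal h)
    have hmeas : Measurable fun l : ℝ =>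
        (∫⁻ x, min (Y x) (ENNReal.ofReal l) ∂μ) * ENNReal.ofReal (l ^ (p - 2)) :=
      hmono.measurable.mul (by fun_prop)
    rw [lintegral_rpow_eq_mul_lintegral_lintegral_min μ hp0 hp1 hX,
      lintegral_rpow_eq_mul_lintegral_lintegral_min μ hp0 hp1 hY, mul_left_comm,
      ← lintegral_const_mul _ hmeas]
    refine mul_le_mul_right (lintegral_mono fun l => ?_) _
    rw [← mul_assoc]
    exact mul_le_mul_left (hXY _) _
  · simpa using hXY ∞

lemma restrict_apply_eq_of_condExp_indicator_eq {Ω : Type*} {m m0 : MeasurableSpace Ω}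
    {μ : Measure Ω} [IsFiniteMeasure μ] (hm : m ≤ m0) {s t G : Set Ω}
    (hs : MeasurableSet s) (ht : MeasurableSet t)
    (hst : μ[s.indicator (fun _ => (1 : ℝ)) | m] =ᵐ[μ] μ[t.indicator (fun _ => (1 : ℝ)) | m])
    (hG : MeasurableSet[m] G) :
    μ.restrict G s = μ.restrict G t := by
  have h : ∫ x in G, s.indicator (fun _ => (1 : ℝ)) x ∂μ =
      ∫ x in G, t.indicator (fun _ => (1 : ℝ)) x ∂μ := by
    rw [← setIntegral_condExp hm ((integrable_const (1 : ℝ)).indicator hs) hG,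
      ← setIntegral_condExp hm ((integrable_const (1 : ℝ)).indicator ht) hG]
    exact integral_congr_ae (ae_restrict_of_ae hst)
  rw [integral_indicator_const _ hs, integral_indicator_const _ ht, smul_eq_mul, smul_eq_mul,
    mul_one, mul_one] at h
  exact (measureReal_eq_measureReal_iff).1 h

theorem identDistrib_restrict_of_condExp_indicator_eq {Ω : Type*} {m m0 : MeasurableSpace Ω}
    {μ : Measure Ω} [IsFiniteMeasure μ] (hm : m ≤ m0) {X Y : Ω → ℝ}
    (hX : Measurable X) (hY : Measurable Y)
    (hXY : ∀ t : ℝ, μ[{x | t ≤ X x}.indicator (fun _ => (1 : ℝ)) | m] =ᵐ[μ]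
      μ[{x | t ≤ Y x}.indicator (fun _ => (1 : ℝ)) | m])
    {G : Set Ω} (hG : MeasurableSet[m] G) :
    IdentDistrib X Y (μ.restrict G) (μ.restrict G) where
  aemeasurable_fst := hX.aemeasurable
  aemeasurable_snd := hY.aemeasurable
  map_eq := Measure.ext_of_Ici _ _ fun t => by
    rw [Measure.map_apply hX measurableSet_Ici, Measure.map_apply hY measurableSet_Ici]
    exact restrict_apply_eq_of_condExp_indicator_eq hm (hX measurableSet_Ici)
      (hY measurableSet_Ici) (hXY t) hG

lemma min_add_le_min_add_min (x y L : ℝ≥0∞) : min (x + y) L ≤ min x L + min y L := by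
  rcases le_total x L with hx | hx
  · rcases le_total y L with hy | hy
    · rw [min_eq_left hx, min_eq_left hy]; exact min_le_left _ _
    · rw [min_eq_right hy]; exact (min_le_right _ _).trans le_add_self
  · rw [min_eq_right hx]; exact (min_le_right _ _).trans le_self_add

section Truncation

variable (a b : ℕ → ℝ≥0∞) (L : ℝ≥0∞)

lemma sum_range_ite_min_le (N : ℕ) :
    ∑ n ∈ range N, (if ∑ i ∈ range n, b i < L then min (b n) L else 0) ≤
      if ∑ i ∈ range N, b i < L then ∑ i ∈ range N, b i else 2 * L := by
  induction N with
  | zero => simp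
  | succ N ih =>
    rw [sum_range_succ, sum_range_succ]
    by_cases hN : ∑ i ∈ range N, b i < L
    · rw [if_pos hN] at ih ⊢
      split_ifs with hN1
      · exact add_le_add ih (min_le_left _ _)
      · calc _ ≤ L + L := add_le_add (ih.trans hN.le) (min_le_right _ _)
          _ = 2 * L := (two_mul L).symm
    · have hN1 : ¬ ∑ i ∈ range N, b i + b N < L := fun h => hN (lt_of_le_of_lt le_self_add h)
      rw [if_neg hN, if_neg hN1, add_zero]
      rwa [if_neg hN] at ih

lemma tsum_ite_min_le_two_mul_min :
    ∑' n, (if ∑ i ∈ range n, b i < L then min (b n) L else 0) ≤ 2 * min (∑' n, b n) L := by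
  rw [ENNReal.tsum_eq_iSup_nat]
  refine iSup_le fun N => (sum_range_ite_min_le b L N).trans ?_
  have hT : ∑ i ∈ range N, b i ≤ ∑' n, b n := ENNReal.sum_le_tsum _
  split_ifs with hN
  · exact (le_min hT hN.le).trans (le_mul_of_one_le_left' one_le_two)
  · rw [min_eq_right ((not_lt.1 hN).trans hT)]

lemma min_sum_range_le (N : ℕ) :
    min (∑ i ∈ range N, a i) L ≤ min (∑ i ∈ range N, b i) L +
      ∑ n ∈ range N,
        (if ∑ i ∈ range n, a i < L ∧ ∑ i ∈ range n, b i < L then min (a n) L else 0) := by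
  induction N with
  | zero => simp
  | succ N ih =>
    rw [sum_range_succ, sum_range_succ, sum_range_succ]
    split_ifs with h
    · calc _ ≤ min (∑ i ∈ range N, a i) L + min (a N) L := min_add_le_min_add_min _ _ _
        _ ≤ _ := by
          rw [← add_assoc]
          exact add_le_add_left (ih.trans (add_le_add_left (min_le_min le_self_add le_rfl) _)) _
    · rw [add_zero]
      rcases not_and_or.1 h with hS | hT
      · calc _ = min (∑ i ∈ range N, a i) L := by
              rw [min_eq_right (not_lt.1 hS), min_eq_right ((not_lt.1 hS).trans le_self_add)]
          _ ≤ _ := ih.trans (by gcongr; exact le_self_add)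
      · calc _ ≤ L := min_le_right _ _
          _ = min (∑ i ∈ range N, b i + b N) L :=
              (min_eq_right ((not_lt.1 hT).trans le_self_add)).symm
          _ ≤ _ := le_self_add

lemma min_tsum_le :
    min (∑' n, a n) L ≤ min (∑' n, b n) L +
      ∑' n, (if ∑ i ∈ range n, a i < L ∧ ∑ i ∈ range n, b i < L then min (a n) L else 0) := by
  rw [ENNReal.tsum_eq_iSup_nat (f := a)]
  change (⨆ N, ∑ i ∈ range N, a i) ⊓ L ≤ _
  rw [iSup_inf_eq]
  refine iSup_le fun N => (min_sum_range_le a b L N).trans ?_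
  gcongr
  · exact ENNReal.sum_le_tsum _
  · exact ENNReal.sum_le_tsum _

end Truncation

theorem lintegral_min_tsum_le_three_mul {Ω : Type*} {m0 : MeasurableSpace Ω} (μ : Measure Ω)
    (F : Filtration ℕ m0) {a b : ℕ → Ω → ℝ≥0∞}
    (ha : ∀ n, Measurable[F (n + 1)] (a n)) (hb : ∀ n, Measurable[F (n + 1)] (b n))
    (L : ℝ≥0∞) (hab : ∀ n G, MeasurableSet[F n] G →
      ∫⁻ x in G, min (a n x) L ∂μ = ∫⁻ x in G, min (b n x) L ∂μ) :
    ∫⁻ x, min (∑' n, a n x) L ∂μ ≤ 3 * ∫⁻ x, min (∑' n, b n x) L ∂μ := by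
  have measurable_of_pred : ∀ {c : ℕ → Ω → ℝ≥0∞}, (∀ n, Measurable[F (n + 1)] (c n)) →
      ∀ n, Measurable (c n) := fun hc n => (hc n).mono (F.le _) le_rfl
  have measurable_partialSum : ∀ {c : ℕ → Ω → ℝ≥0∞}, (∀ n, Measurable[F (n + 1)] (c n)) →
      ∀ n, Measurable[F n] fun x => ∑ i ∈ range n, c i x := fun hc n =>
    Finset.measurable_sum _ fun i hi => (hc i).mono (F.mono (mem_range.1 hi)) le_rfl
  set G : ℕ → Set Ω := fun n => {x | ∑ i ∈ range n, a i x < L ∧ ∑ i ∈ range n, b i x < L}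
  have hGF : ∀ n, MeasurableSet[F n] (G n) := fun n =>
    (measurableSet_lt (measurable_partialSum ha n) measurable_const).inter
      (measurableSet_lt (measurable_partialSum hb n) measurable_const)
  set U : Ω → ℝ≥0∞ := fun x => ∑' n, (G n).indicator (fun y => min (a n y) L) x
  set V : Ω → ℝ≥0∞ := fun x => ∑' n, (G n).indicator (fun y => min (b n y) L) x
  have hUV : ∫⁻ x, U x ∂μ = ∫⁻ x, V x ∂μ := by
    rw [lintegral_tsum fun n => (((measurable_of_pred ha n).min measurable_const).indicator
        (F.le n _ (hGF n))).aemeasurable,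
      lintegral_tsum fun n => (((measurable_of_pred hb n).min measurable_const).indicator
        (F.le n _ (hGF n))).aemeasurable]
    refine tsum_congr fun n => ?_
    rw [lintegral_indicator (F.le n _ (hGF n)), lintegral_indicator (F.le n _ (hGF n))]
    exact hab n _ (hGF n)
  have hS : ∀ x, min (∑' n, a n x) L ≤ min (∑' n, b n x) L + U x := fun x => by
    simpa only [U, G, Set.indicator_apply, Set.mem_ofPred_eq] using min_tsum_le (a · x) (b · x) L
  have hV : ∀ x, V x ≤ 2 * min (∑' n, b n x) L := by
    refine fun x => (ENNReal.tsum_le_tsum fun n => ?_).trans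
      (tsum_ite_min_le_two_mul_min (b · x) L)
    by_cases hx : x ∈ G n
    · rw [Set.indicator_of_mem hx, if_pos hx.2]
    · rw [Set.indicator_of_notMem hx]
      exact zero_le
  have hT : Measurable fun x => min (∑' n, b n x) L :=
    (Measurable.tsum (measurable_of_pred hb)).min measurable_const
  calc ∫⁻ x, min (∑' n, a n x) L ∂μ
      ≤ ∫⁻ x, min (∑' n, b n x) L + U x ∂μ := lintegral_mono hS
    _ = ∫⁻ x, min (∑' n, b n x) L ∂μ + ∫⁻ x, V x ∂μ := by rw [lintegral_add_left hT, hUV]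
    _ ≤ ∫⁻ x, min (∑' n, b n x) L ∂μ + ∫⁻ x, 2 * min (∑' n, b n x) L ∂μ := by
      gcongr with x; exact hV x
    _ = 3 * ∫⁻ x, min (∑' n, b n x) L ∂μ := by
      rw [lintegral_const_mul' 2 _ (by norm_num)]; ring

theorem stmt3_general {Ω : Type*} {m0 : MeasurableSpace Ω} (μ : Measure Ω) [IsProbabilityMeasure μ]
    (F : Filtration ℕ m0) (e d : ℕ → Ω → ℝ)
    (he_adapted : Adapted F e) (hd_adapted : Adapted F d)
    (htangent : ∀ n : ℕ, 1 ≤ n → ∀ t : ℝ,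
      μ[Set.indicator {x | t ≤ e n x} (fun _ => (1 : ℝ)) | F (n - 1)] =ᵐ[μ]
        μ[Set.indicator {x | t ≤ d n x} (fun _ => (1 : ℝ)) | F (n - 1)])
    (p : ℝ) (hp0 : 0 < p) (hp1 : p ≤ 1) :
    ∫⁻ x, (∑' n : ℕ, ENNReal.ofReal (e (n + 1) x)) ^ p ∂μ ≤
      6 * ∫⁻ x, (∑' n : ℕ, ENNReal.ofReal (d (n + 1) x)) ^ p ∂μ := by
  have hmeas : ∀ {f : ℕ → Ω → ℝ}, Adapted F f → ∀ n, Measurable (f n) := fun hf n =>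
    (hf n).mono (F.le n) le_rfl
  have hpred : ∀ {f : ℕ → Ω → ℝ}, Adapted F f →
      ∀ n, Measurable[F (n + 1)] fun x => ENNReal.ofReal (f (n + 1) x) := fun hf n =>
    (hf (n + 1)).ennreal_ofReal
  have htrunc : ∀ L n G, MeasurableSet[F n] G →
      ∫⁻ x in G, min (ENNReal.ofReal (e (n + 1) x)) L ∂μ =
        ∫⁻ x in G, min (ENNReal.ofReal (d (n + 1) x)) L ∂μ := fun L n G hG => by
    have hn := htangent (n + 1) (Nat.le_add_left 1 n)
    rw [Nat.add_sub_cancel] at hn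
    exact ((identDistrib_restrict_of_condExp_indicator_eq (F.le n) (hmeas he_adapted _)
      (hmeas hd_adapted _) hn hG).comp (u := fun r => min (ENNReal.ofReal r) L)
      (by fun_prop)).lintegral_eq
  calc _ ≤ 3 * ∫⁻ x, (∑' n : ℕ, ENNReal.ofReal (d (n + 1) x)) ^ p ∂μ :=
        lintegral_rpow_le_of_lintegral_min_le
          (.tsum fun n => (hmeas he_adapted _).ennreal_ofReal)
          (.tsum fun n => (hmeas hd_adapted _).ennreal_ofReal)
          (fun L => lintegral_min_tsum_le_three_mul μ F (hpred he_adapted) (hpred hd_adapted) L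
            (htrunc L)) hp0 hp1
    _ ≤ 6 * _ := by gcongr; norm_num

/-- Comparison of `L^p` norms (for `p ∈ (0,1]`) of sums of two nonnegative adapted
tangent processes: `E[(∑_{n≥1} e_n)^p] ≤ 6 E[(∑_{n≥1} d_n)^p]`. -/
theorem stmt3 {Ω : Type*} {m0 : MeasurableSpace Ω} (μ : Measure Ω) [IsProbabilityMeasure μ]
    (F : Filtration ℕ m0) (e d : ℕ → Ω → ℝ)
    (he_nonneg : ∀ n x, 0 ≤ e n x) (hd_nonneg : ∀ n x, 0 ≤ d n x)
    (he_adapted : Adapted F e) (hd_adapted : Adapted F d)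
    (htangent : ∀ n : ℕ, 1 ≤ n → ∀ t : ℝ,
      μ[Set.indicator {x | t ≤ e n x} (fun _ => (1 : ℝ)) | F (n - 1)] =ᵐ[μ]
        μ[Set.indicator {x | t ≤ d n x} (fun _ => (1 : ℝ)) | F (n - 1)])
    (p : ℝ) (hp0 : 0 < p) (hp1 : p ≤ 1) :
    ∫⁻ x, (∑' n : ℕ, ENNReal.ofReal (e (n + 1) x)) ^ p ∂μ ≤
      6 * ∫⁻ x, (∑' n : ℕ, ENNReal.ofReal (d (n + 1) x)) ^ p ∂μ :=
  stmt3_general μ F e d he_adapted hd_adapted htangent p hp0 hp1
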